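/- Let G be a forest with no isolated vertices. Then G is well-covered (all maximal independent sets have the same size) if and only if the pendant edges of G (edges incident to a degree-1 vertex) form a perfect matching of G; in that case every maximal independent set has cardinality n/2. -/

import Mathlib

/-- `S` is an independent set of `G`: no two vertices of `S` are adjacent. -/
def IsIndep {n : ℕ} (G : SimpleGraph (Fin n)) (S : Finset (Fin n)) : Prop :=
  ∀ i ∈ S, ∀ j ∈ S, ¬ G.Adj i j

/-- `S` is a maximal independent set of `G`. -/
def IsMaxIndep {n : ℕ} (G : SimpleGraph (Fin n)) (S : Finset (Fin n)) : Prop :=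
  IsIndep G S ∧ ∀ T : Finset (Fin n), IsIndep G T → S ⊆ T → T = S

/-- A pendant edge of `G`: an edge one of whose endpoints has degree 1. -/
def PendantAdj {n : ℕ} (G : SimpleGraph (Fin n)) [DecidableRel G.Adj]
    (v w : Fin n) : Prop :=
  G.Adj v w ∧ (G.degree v = 1 ∨ G.degree w = 1)


/- ------------------------------------------------------------------ -/
/- Auxiliary development                                               -/
/- ------------------------------------------------------------------ -/

namespace PlumAux

open SimpleGraph Finset

set_option linter.unusedSectionVars false
set_option linter.unusedVariables false

section General

variable {V : Type} [Fintype V] [DecidableEq V]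

def Ind (G : SimpleGraph V) (S : Finset V) : Prop := ∀ i ∈ S, ∀ j ∈ S, ¬ G.Adj i j

def MaxInd (G : SimpleGraph V) (S : Finset V) : Prop :=
  Ind G S ∧ ∀ T : Finset V, Ind G T → S ⊆ T → T = S

def WC (G : SimpleGraph V) : Prop := ∀ S T, MaxInd G S → MaxInd G T → S.card = T.card

lemma extendInd (G : SimpleGraph V) (A : Finset V) (hA : Ind G A) :
    ∃ S, MaxInd G S ∧ A ⊆ S := by
  classical
  set 𝒮 : Finset (Finset V) := univ.filter (fun T => Ind G T ∧ A ⊆ T) with h𝒮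
  have hne : 𝒮.Nonempty := ⟨A, by simp [h𝒮, hA]⟩
  obtain ⟨S, hS, hmax⟩ := Finset.exists_max_image 𝒮 Finset.card hne
  simp only [h𝒮, mem_filter, mem_univ, true_and] at hS hmax
  refine ⟨S, ⟨hS.1, fun T hT hST => ?_⟩, hS.2⟩
  exact (Finset.eq_of_subset_of_card_le hST (hmax T ⟨hT, hS.2.trans hST⟩)).symm

lemma ind_insert (G : SimpleGraph V) {S : Finset V} (hS : Ind G S) (v : V)
    (hv : ∀ j ∈ S, ¬ G.Adj v j) : Ind G (insert v S) := by
  intro i hi j hj hadj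
  rcases mem_insert.mp hi with rfl | hiS
  · rcases mem_insert.mp hj with rfl | hjS
    · exact G.loopless.irrefl _ hadj
    · exact hv _ hjS hadj
  · rcases mem_insert.mp hj with rfl | hjS
    · exact hv _ hiS hadj.symm
    · exact hS _ hiS _ hjS hadj

lemma nbr_singleton (G : SimpleGraph V) [DecidableRel G.Adj] {w u : V}
    (hd : G.degree w = 1) (h : G.Adj w u) : G.neighborFinset w = {u} := by
  have hd' : (G.neighborFinset w).card = 1 := hd
  obtain ⟨a, ha⟩ := Finset.card_eq_one.mp hd'
  have hu : u ∈ G.neighborFinset w := (G.mem_neighborFinset w u).mpr h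
  rw [ha] at hu ⊢
  rw [Finset.mem_singleton] at hu
  rw [hu]

lemma adj_of_leaf (G : SimpleGraph V) [DecidableRel G.Adj] {w u z : V}
    (hd : G.degree w = 1) (h : G.Adj w u) (hz : G.Adj w z) : z = u := by
  have := (G.mem_neighborFinset w z).mpr hz
  rw [nbr_singleton G hd h, Finset.mem_singleton] at this
  exact this

lemma deg_one_of_nbrs (G : SimpleGraph V) [DecidableRel G.Adj] {z u : V}
    (hadj : G.Adj z u) (hall : ∀ b, G.Adj z b → b = u) : G.degree z = 1 := by
  have h : G.neighborFinset z = {u} := by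
    ext b
    rw [mem_neighborFinset, Finset.mem_singleton]
    exact ⟨fun hb => hall b hb, fun hb => hb ▸ hadj⟩
  show (G.neighborFinset z).card = 1
  rw [h, Finset.card_singleton]

lemma uniqueLeaf (G : SimpleGraph V) [DecidableRel G.Adj] (hwc : WC G) {u w1 w2 : V}
    (h1 : G.Adj u w1) (h2 : G.Adj u w2) (hd1 : G.degree w1 = 1) (hd2 : G.degree w2 = 1) :
    w1 = w2 := by
  by_contra hne
  obtain ⟨S, hS, hUS⟩ := extendInd G {u} (by intro i hi j hj; simp_all [G.loopless.irrefl u])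
  have huS : u ∈ S := hUS (mem_singleton_self u)
  have hw1S : w1 ∉ S := fun h => hS.1 u huS w1 h h1
  have hw2S : w2 ∉ S := fun h => hS.1 u huS w2 h h2
  set S' := insert w1 (insert w2 (S.erase u)) with hS'
  have hind : Ind G S' := by
    intro i hi j hj hadj
    simp only [hS', mem_insert, mem_erase] at hi hj
    have key : ∀ z, G.Adj w1 z ∨ G.Adj w2 z → z = u := by
      rintro z (hz | hz)
      · exact adj_of_leaf G hd1 h1.symm hz
      · exact adj_of_leaf G hd2 h2.symm hz
    rcases hi with rfl | rfl | hi <;> rcases hj with rfl | rfl | hj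
    · exact G.loopless.irrefl _ hadj
    · exact h2.ne' (key _ (Or.inl hadj))
    · exact hj.1 (key _ (Or.inl hadj))
    · exact h1.ne' (key _ (Or.inr hadj))
    · exact G.loopless.irrefl _ hadj
    · exact hj.1 (key _ (Or.inr hadj))
    · exact hi.1 (key _ (Or.inl hadj.symm))
    · exact hi.1 (key _ (Or.inr hadj.symm))
    · exact hS.1 _ hi.2 _ hj.2 hadj
  obtain ⟨T, hT, hsub⟩ := extendInd G S' hind
  have hcard : S'.card = S.card + 1 := by
    have h2' : w2 ∉ S.erase u := fun h => hw2S (mem_of_mem_erase h)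
    have h1' : w1 ∉ insert w2 (S.erase u) := by
      simp only [mem_insert, mem_erase]
      push_neg
      exact ⟨hne, fun _ => hw1S⟩
    rw [hS', card_insert_of_notMem h1', card_insert_of_notMem h2',
      card_erase_of_mem huS]
    have : 1 ≤ S.card := card_pos.mpr ⟨u, huS⟩
    omega
  have hle : S'.card ≤ T.card := card_le_card hsub
  have := hwc S T hS hT
  omega

lemma countLemma (G : SimpleGraph V) [DecidableRel G.Adj]
    (hpm : ∀ v : V, ∃! w, G.Adj v w ∧ (G.degree v = 1 ∨ G.degree w = 1))
    {S : Finset V} (hS : MaxInd G S) : 2 * S.card = Fintype.card V := by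
  classical
  choose f hf huniq using hpm
  have hinv : ∀ v, f (f v) = v := by
    intro v
    exact (huniq (f v) v ⟨(hf v).1.symm, (hf v).2.symm⟩).symm
  have key1 : ∀ v ∈ S, f v ∉ S := fun v hv hfv => hS.1 v hv (f v) hfv (hf v).1
  have key2 : ∀ v, v ∉ S → f v ∈ S := by
    intro v hv
    by_contra hfv
    rcases (hf v).2 with hdv | hdf
    · have hind : Ind G (insert v S) :=
        ind_insert G hS.1 v (fun j hj hadj => hfv ((adj_of_leaf G hdv (hf v).1 hadj) ▸ hj))
      have := hS.2 _ hind (subset_insert _ _)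
      exact hv (this ▸ mem_insert_self v S)
    · have hind : Ind G (insert (f v) S) :=
        ind_insert G hS.1 (f v)
          (fun j hj hadj => hv ((adj_of_leaf G hdf (hf v).1.symm hadj) ▸ hj))
      have := hS.2 _ hind (subset_insert _ _)
      exact hfv (this ▸ mem_insert_self (f v) S)
  have hbij : S.card = (univ \ S).card := by
    apply Finset.card_bij (fun a _ => f a)
    · intro a ha
      simp only [mem_sdiff, mem_univ, true_and]
      exact key1 a ha
    · intro a ha b hb hab
      have := congrArg f hab
      rwa [hinv, hinv] at this
    · intro b hb
      simp only [mem_sdiff, mem_univ, true_and] at hb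
      exact ⟨f b, key2 b hb, hinv b⟩
  have h1 : (univ \ S).card = Fintype.card V - S.card := by
    rw [card_sdiff_of_subset (subset_univ S), card_univ]
  have h2 : S.card ≤ Fintype.card V := by
    rw [← card_univ]; exact card_le_card (subset_univ S)
  omega

/- Induced subgraphs on a subtype -/

def RG (G : SimpleGraph V) (p : V → Prop) : SimpleGraph {x : V // p x} where
  Adj a b := G.Adj a.1 b.1
  symm := ⟨fun a b (h : G.Adj a.1 b.1) => h.symm⟩
  loopless := ⟨fun a (h : G.Adj a.1 a.1) => G.loopless.irrefl a.1 h⟩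

instance (G : SimpleGraph V) [DecidableRel G.Adj] (p : V → Prop) :
    DecidableRel (RG G p).Adj :=
  fun a b => inferInstanceAs (Decidable (G.Adj a.1 b.1))

lemma RG_adj {G : SimpleGraph V} {p : V → Prop} {a b : {x : V // p x}} :
    (RG G p).Adj a b ↔ G.Adj a.1 b.1 := Iff.rfl

lemma RG_degree (G : SimpleGraph V) [DecidableRel G.Adj] (p : V → Prop) [DecidablePred p]
    (a : {x : V // p x}) :
    (RG G p).degree a = ((G.neighborFinset a.1).filter p).card := by
  rw [← card_neighborFinset_eq_degree]
  have h : (RG G p).neighborFinset a = ((G.neighborFinset a.1).filter p).subtype p := by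
    ext b
    simp only [mem_neighborFinset, Finset.mem_subtype, Finset.mem_filter]
    exact ⟨fun h => ⟨h, b.2⟩, fun h => h.1⟩
  rw [h, Finset.card_subtype, Finset.filter_filter]
  simp

lemma RG_acyclic (G : SimpleGraph V) {p : V → Prop} (hac : G.IsAcyclic) :
    (RG G p).IsAcyclic := by
  rw [isAcyclic_iff_path_unique]
  intro a b P Q
  let f : RG G p →g G := ⟨Subtype.val, fun h => h⟩
  have hinj : Function.Injective f := Subtype.val_injective
  have hPQ : P.1.map f = Q.1.map f := by
    have := isAcyclic_iff_path_unique.mp hac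
      ⟨P.1.map f, P.1.map_isPath_of_injective hinj P.2⟩
      ⟨Q.1.map f, Q.1.map_isPath_of_injective hinj Q.2⟩
    exact congrArg Subtype.val this
  exact Subtype.ext ((SimpleGraph.Walk.map_injective_of_injective hinj a b) hPQ)

lemma memL {p : V → Prop} {S2 : Finset {x : V // p x}} (z : V) :
    z ∈ S2.map (Function.Embedding.subtype p) ↔ ∃ h : p z, (⟨z, h⟩ : {x : V // p x}) ∈ S2 := by
  simp only [Finset.mem_map, Function.Embedding.coe_subtype]
  constructor
  · rintro ⟨a, ha, rfl⟩; exact ⟨a.2, by simpa using ha⟩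
  · rintro ⟨h, ha⟩; exact ⟨⟨z, h⟩, ha, rfl⟩

lemma L_ind (G : SimpleGraph V) {p : V → Prop} {S2 : Finset {x : V // p x}}
    (hS2 : Ind (RG G p) S2) : Ind G (S2.map (Function.Embedding.subtype p)) := by
  intro i hi j hj hadj
  obtain ⟨hpi, hiS⟩ := (memL i).mp hi
  obtain ⟨hpj, hjS⟩ := (memL j).mp hj
  exact hS2 _ hiS _ hjS hadj

lemma max_of_lift (G : SimpleGraph V) {p : V → Prop} {S2 : Finset {x : V // p x}}
    (hS2 : MaxInd (RG G p) S2) {a : V}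
    (hind : Ind G (insert a (S2.map (Function.Embedding.subtype p))))
    (hcover : ∀ T : Finset V, Ind G T →
      insert a (S2.map (Function.Embedding.subtype p)) ⊆ T → ∀ t ∈ T, t = a ∨ p t) :
    MaxInd G (insert a (S2.map (Function.Embedding.subtype p))) := by
  classical
  set L := S2.map (Function.Embedding.subtype p) with hL
  refine ⟨hind, fun T hT hsub => ?_⟩
  apply Finset.Subset.antisymm _ hsub
  intro t ht
  rcases hcover T hT hsub t ht with rfl | hpt
  · exact mem_insert_self _ _
  by_cases htL : t ∈ L
  · exact mem_insert_of_mem htL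
  exfalso
  have hLT : L ⊆ T := (subset_insert _ _).trans hsub
  have hT2 : Ind (RG G p) (insert ⟨t, hpt⟩ S2) := by
    intro i hi j hj hadj
    have hmem : ∀ b : {x : V // p x}, b ∈ insert (⟨t, hpt⟩ : {x : V // p x}) S2 → b.1 ∈ T := by
      intro b hb
      rcases mem_insert.mp hb with rfl | hb
      · exact ht
      · exact hLT ((memL b.1).mpr ⟨b.2, by simpa using hb⟩)
    exact hT _ (hmem i hi) _ (hmem j hj) hadj
  have := hS2.2 _ hT2 (subset_insert _ _)
  have htS2 : (⟨t, hpt⟩ : {x : V // p x}) ∈ S2 := this ▸ mem_insert_self _ _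
  exact htL ((memL t).mpr ⟨hpt, htS2⟩)

lemma lift_pendant (G : SimpleGraph V) [DecidableRel G.Adj] {u w : V}
    (huw : G.Adj u w) (hw : G.neighborFinset w = {u})
    {S2 : Finset {x : V // x ≠ u ∧ x ≠ w}}
    (hS2 : MaxInd (RG G (fun z => z ≠ u ∧ z ≠ w)) S2) :
    ∃ S : Finset V, MaxInd G S ∧ S.card = S2.card + 1 := by
  classical
  have hadjw : ∀ z, G.Adj w z → z = u := by
    intro z hz
    have := (G.mem_neighborFinset w z).mpr hz
    rw [hw, Finset.mem_singleton] at this; exact this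
  have hLind : Ind G (S2.map (Function.Embedding.subtype fun z => z ≠ u ∧ z ≠ w)) :=
    L_ind G hS2.1
  have huL : u ∉ S2.map (Function.Embedding.subtype fun z => z ≠ u ∧ z ≠ w) :=
    fun h => ((memL u).mp h).choose.1 rfl
  have hwL : w ∉ S2.map (Function.Embedding.subtype fun z => z ≠ u ∧ z ≠ w) :=
    fun h => ((memL w).mp h).choose.2 rfl
  by_cases hnb : ∃ s ∈ S2.map (Function.Embedding.subtype fun z => z ≠ u ∧ z ≠ w), G.Adj u s
  · obtain ⟨s, hsL, hus⟩ := hnb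
    refine ⟨insert w _, max_of_lift G hS2 ?_ ?_,
      by rw [card_insert_of_notMem hwL, card_map]⟩
    · exact ind_insert G hLind w (fun j hj hadj => huL ((hadjw j hadj) ▸ hj))
    · intro T hT hsub t ht
      by_cases htw : t = w
      · exact Or.inl htw
      refine Or.inr ⟨fun htu => ?_, htw⟩
      exact hT t ht s (hsub (mem_insert_of_mem hsL)) (htu ▸ hus)
  · push_neg at hnb
    refine ⟨insert u _, max_of_lift G hS2 ?_ ?_,
      by rw [card_insert_of_notMem huL, card_map]⟩
    · exact ind_insert G hLind u (fun j hj hadj => hnb j hj hadj)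
    · intro T hT hsub t ht
      by_cases htu : t = u
      · exact Or.inl htu
      refine Or.inr ⟨htu, fun htw => ?_⟩
      exact hT u (hsub (mem_insert_self u _)) t ht (htw ▸ huw)

lemma lift_closed (G : SimpleGraph V) [DecidableRel G.Adj] {u w x : V}
    (hu : G.neighborFinset u = {w, x})
    {S2 : Finset {z : V // z ≠ u ∧ z ≠ w ∧ z ≠ x}}
    (hS2 : MaxInd (RG G (fun z => z ≠ u ∧ z ≠ w ∧ z ≠ x)) S2) :
    ∃ S : Finset V, MaxInd G S ∧ S.card = S2.card + 1 := by
  classical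
  have hadju : ∀ z, G.Adj u z → z = w ∨ z = x := by
    intro z hz
    have := (G.mem_neighborFinset u z).mpr hz
    rw [hu] at this; simpa using this
  have hLind : Ind G (S2.map (Function.Embedding.subtype fun z => z ≠ u ∧ z ≠ w ∧ z ≠ x)) :=
    L_ind G hS2.1
  have huL : u ∉ S2.map (Function.Embedding.subtype fun z => z ≠ u ∧ z ≠ w ∧ z ≠ x) :=
    fun h => ((memL u).mp h).choose.1 rfl
  refine ⟨insert u _, max_of_lift G hS2 ?_ ?_,
    by rw [card_insert_of_notMem huL, card_map]⟩
  · refine ind_insert G hLind u (fun j hj hadj => ?_)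
    obtain ⟨h, _⟩ := (memL j).mp hj
    rcases hadju j hadj with rfl | rfl
    · exact h.2.1 rfl
    · exact h.2.2 rfl
  · intro T hT hsub t ht
    by_cases htu : t = u
    · exact Or.inl htu
    have hnadj : ¬ G.Adj u t := hT u (hsub (mem_insert_self u _)) t ht
    refine Or.inr ⟨htu, fun htw => hnadj ?_, fun htx => hnadj ?_⟩
    · rw [htw, ← mem_neighborFinset, hu]; simp
    · rw [htx, ← mem_neighborFinset, hu]; simp

lemma WC_del_pendant (G : SimpleGraph V) [DecidableRel G.Adj] {u w : V}
    (huw : G.Adj u w) (hw : G.neighborFinset w = {u}) (hwc : WC G) :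
    WC (RG G (fun z => z ≠ u ∧ z ≠ w)) := by
  intro S2 T2 hS2 hT2
  obtain ⟨S, hS, hSc⟩ := lift_pendant G huw hw hS2
  obtain ⟨T, hT, hTc⟩ := lift_pendant G huw hw hT2
  have := hwc S T hS hT
  omega

lemma WC_del_closed (G : SimpleGraph V) [DecidableRel G.Adj] {u w x : V}
    (hu : G.neighborFinset u = {w, x}) (hwc : WC G) :
    WC (RG G (fun z => z ≠ u ∧ z ≠ w ∧ z ≠ x)) := by
  intro S2 T2 hS2 hT2
  obtain ⟨S, hS, hSc⟩ := lift_closed G hu hS2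
  obtain ⟨T, hT, hTc⟩ := lift_closed G hu hT2
  have := hwc S T hS hT
  omega

end General

/- Walk helpers -/

section Walks

variable {V : Type} {G : SimpleGraph V}

lemma path_length_eq_dist [DecidableEq V] (hac : G.IsAcyclic) {a b : V} (q : G.Walk a b)
    (hq : q.IsPath) : q.length = G.dist a b := by
  have hr : G.Reachable a b := ⟨q⟩
  obtain ⟨r, hrlen⟩ := hr.exists_walk_length_eq_dist
  have h2 : r.bypass.IsPath := r.bypass_isPath
  have heq : (⟨q, hq⟩ : G.Path a b) = ⟨r.bypass, h2⟩ := isAcyclic_iff_path_unique.mp hac _ _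
  have hqb : q = r.bypass := congrArg Subtype.val heq
  have h3 : r.bypass.length ≤ r.length := r.length_bypass_le
  have h4 : G.dist a b ≤ q.length := SimpleGraph.dist_le q
  have h5 := congrArg SimpleGraph.Walk.length hqb
  omega

lemma concat_isPath_iff' {a b c : V} (p : G.Walk a b) (h : G.Adj b c) :
    (p.concat h).IsPath ↔ p.IsPath ∧ c ∉ p.support := by
  rw [← SimpleGraph.Walk.isPath_reverse_iff, SimpleGraph.Walk.reverse_concat,
    SimpleGraph.Walk.cons_isPath_iff, SimpleGraph.Walk.isPath_reverse_iff,
    SimpleGraph.Walk.support_reverse]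
  simp [List.mem_reverse]

lemma notMem_end_takeUntil [DecidableEq V] {v w : V} {p : G.Walk v w} (hp : p.IsPath)
    {b : V} (hb : b ∈ p.support) (hne : b ≠ w) : w ∉ (p.takeUntil b hb).support := by
  intro hmem
  have hspec := p.take_spec hb
  have hnodup := hp.support_nodup
  rw [← hspec, SimpleGraph.Walk.support_append] at hnodup
  have hdisj := List.disjoint_of_nodup_append hnodup
  have hwd : w ∈ (p.dropUntil b hb).support := SimpleGraph.Walk.end_mem_support _
  have : w ∈ (p.dropUntil b hb).support.tail := by
    rw [SimpleGraph.Walk.support_eq_cons] at hwd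
    rcases List.mem_cons.mp hwd with h1 | h1
    · exact absurd h1.symm hne
    · exact h1
  exact hdisj hmem this

lemma exists_concat {v w : V} (p : G.Walk v w) (hne : w ≠ v) :
    ∃ (u : V) (r : G.Walk v u) (h : G.Adj u w), p = r.concat h := by
  obtain ⟨u, huw, q, hq⟩ := SimpleGraph.Walk.exists_eq_cons_of_ne hne p.reverse
  refine ⟨u, q.reverse, huw.symm, ?_⟩
  have := congrArg SimpleGraph.Walk.reverse hq
  rw [SimpleGraph.Walk.reverse_reverse] at this
  rw [this, SimpleGraph.Walk.reverse_cons, SimpleGraph.Walk.concat_eq_append]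

end Walks


lemma pendant_unique {V : Type} [Fintype V] [DecidableEq V] (G : SimpleGraph V)
    [DecidableRel G.Adj] (hwc : WC G)
    (part1 : ∀ v : V, G.degree v = 1 ∨ ∃ w, G.Adj v w ∧ G.degree w = 1) :
    ∀ v : V, ∃! w, G.Adj v w ∧ (G.degree v = 1 ∨ G.degree w = 1) := by
  intro v
  by_cases hv1 : G.degree v = 1
  · have hd' : (G.neighborFinset v).card = 1 := hv1
    obtain ⟨a, ha⟩ := Finset.card_eq_one.mp hd'
    have hadj : G.Adj v a := (G.mem_neighborFinset v a).mp (ha ▸ Finset.mem_singleton_self a)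
    refine ⟨a, ⟨hadj, Or.inl hv1⟩, ?_⟩
    rintro y ⟨hy, -⟩
    exact adj_of_leaf G hv1 hadj hy
  · rcases part1 v with h | ⟨w, hvw, hw1⟩
    · exact absurd h hv1
    refine ⟨w, ⟨hvw, Or.inr hw1⟩, ?_⟩
    rintro y ⟨hy, hcase⟩
    rcases hcase with h | h
    · exact absurd h hv1
    · exact uniqueLeaf G hwc hy hvw h hw1


/- The main induction -/

lemma mainInd : ∀ (m : ℕ) (V : Type) [Fintype V] [DecidableEq V] (G : SimpleGraph V)
    [DecidableRel G.Adj], Fintype.card V = m → G.IsAcyclic → (∀ v, 0 < G.degree v) →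
    WC G → ((∀ v : V, G.degree v = 1 ∨ ∃ w, G.Adj v w ∧ G.degree w = 1) ∧ Even m) := by
  intro m
  induction m using Nat.strong_induction_on with
  | _ m IH =>
  intro V _ _ G _ hcard hac hdeg hwc
  classical
  have hpu := isAcyclic_iff_path_unique.mp hac
  have part1 : ∀ v : V, G.degree v = 1 ∨ ∃ w, G.Adj v w ∧ G.degree w = 1 := by
    intro v
    by_contra hcon
    push_neg at hcon
    obtain ⟨hv1, hbad⟩ := hcon
    have hm_pos : 0 < m := hcard ▸ Fintype.card_pos_iff.mpr ⟨v⟩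
    -- pick a vertex w farthest from v
    obtain ⟨w, hwC, hwmax⟩ := Finset.exists_max_image
      (univ.filter (fun z => G.Reachable v z)) (fun z => G.dist v z)
      ⟨v, Finset.mem_filter.mpr ⟨Finset.mem_univ v, SimpleGraph.Reachable.refl v⟩⟩
    have hrvw : G.Reachable v w := (Finset.mem_filter.mp hwC).2
    have hmaxd : ∀ z, G.Reachable v z → G.dist v z ≤ G.dist v w := by
      intro z hz
      exact hwmax z (by simp [hz])
    obtain ⟨q0, hq0⟩ := hrvw.exists_walk_length_eq_dist
    have hp : q0.bypass.IsPath := q0.bypass_isPath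
    set p := q0.bypass with hpdef
    have hplen : p.length = G.dist v w := path_length_eq_dist hac p hp
    -- w ≠ v
    obtain ⟨b0, hb0⟩ := (G.degree_pos_iff_exists_adj v).mp (hdeg v)
    have hd1 : 1 ≤ G.dist v w := by
      have hpath : (SimpleGraph.Walk.cons hb0 SimpleGraph.Walk.nil : G.Walk v b0).IsPath := by
        simp [hb0.ne]
      have hlen := path_length_eq_dist hac _ hpath
      have hlen1 : (SimpleGraph.Walk.cons hb0 SimpleGraph.Walk.nil : G.Walk v b0).length = 1 := by
        simp
      have hrb : G.Reachable v b0 := ⟨SimpleGraph.Walk.cons hb0 SimpleGraph.Walk.nil⟩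
      have := hmaxd b0 hrb
      omega
    have hwv : w ≠ v := by
      intro h
      rw [h, SimpleGraph.dist_self] at hd1
      omega
    -- decompose p = r.concat (u ~ w)
    obtain ⟨u, r, huw, hpr⟩ := exists_concat p hwv
    have hrfacts : r.IsPath ∧ w ∉ r.support := by
      rw [hpr] at hp
      exact (concat_isPath_iff' r huw).mp hp
    have hrlen : r.length + 1 = G.dist v w := by
      have h := congrArg SimpleGraph.Walk.length hpr
      rw [SimpleGraph.Walk.length_concat] at h
      omega
    -- Claim 1 : w is a leaf with unique neighbor u
    have hwnbr : ∀ z, G.Adj w z → z = u := by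
      intro b hwb
      by_contra hbu
      by_cases hbp : b ∈ p.support
      · have hqpath : (p.takeUntil b hbp).IsPath := hp.takeUntil hbp
        have hbw : b ≠ w := hwb.ne'
        have hwq : w ∉ (p.takeUntil b hbp).support := notMem_end_takeUntil hp hbp hbw
        have hq2 : ((p.takeUntil b hbp).concat hwb.symm).IsPath :=
          (concat_isPath_iff' _ _).mpr ⟨hqpath, hwq⟩
        have heq : (⟨p, hp⟩ : G.Path v w) = ⟨(p.takeUntil b hbp).concat hwb.symm, hq2⟩ :=
          hpu _ _
        have heqw : r.concat huw = (p.takeUntil b hbp).concat hwb.symm := by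
          rw [← hpr]
          exact congrArg Subtype.val heq
        obtain ⟨h1, -⟩ := SimpleGraph.Walk.concat_inj heqw
        exact hbu h1.symm
      · have hext : (p.concat hwb).IsPath := (concat_isPath_iff' _ _).mpr ⟨hp, hbp⟩
        have hlen := path_length_eq_dist hac _ hext
        rw [SimpleGraph.Walk.length_concat, hplen] at hlen
        have := hmaxd b ⟨p.concat hwb⟩
        omega
    have hwdeg : G.degree w = 1 := deg_one_of_nbrs G huw.symm hwnbr
    have hvu : v ≠ u := by
      intro h
      exact hbad w (h ▸ huw) hwdeg
    -- decompose r = r2.concat (x ~ u)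
    obtain ⟨x, r2, hxu, hr2⟩ := exists_concat r hvu.symm
    have hr2facts : r2.IsPath ∧ u ∉ r2.support := by
      have h := hrfacts.1
      rw [hr2] at h
      exact (concat_isPath_iff' r2 hxu).mp h
    have hxr : x ∈ r.support := by
      rw [hr2, SimpleGraph.Walk.support_concat]
      exact List.mem_append.mpr (Or.inl (SimpleGraph.Walk.end_mem_support r2))
    have hwx : w ≠ x := fun h => hrfacts.2 (h ▸ hxr)
    -- Claim 2 : u's only neighbors are w and x
    have hunbr : ∀ c, G.Adj u c → c = w ∨ c = x := by
      intro c huc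
      by_contra hcon2
      push_neg at hcon2
      obtain ⟨hcw, hcx⟩ := hcon2
      have hcu : c ≠ u := huc.ne'
      by_cases hcr : c ∈ r.support
      · have hqpath : (r.takeUntil c hcr).IsPath := hrfacts.1.takeUntil hcr
        have huq : u ∉ (r.takeUntil c hcr).support := notMem_end_takeUntil hrfacts.1 hcr hcu
        have hq2 : ((r.takeUntil c hcr).concat huc.symm).IsPath :=
          (concat_isPath_iff' _ _).mpr ⟨hqpath, huq⟩
        have heq : (⟨r, hrfacts.1⟩ : G.Path v u) = ⟨(r.takeUntil c hcr).concat huc.symm, hq2⟩ :=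
          hpu _ _
        have heqw : r2.concat hxu = (r.takeUntil c hcr).concat huc.symm := by
          rw [← hr2]
          exact congrArg Subtype.val heq
        obtain ⟨h1, -⟩ := SimpleGraph.Walk.concat_inj heqw
        exact hcx h1.symm
      · have hrc : (r.concat huc).IsPath := (concat_isPath_iff' _ _).mpr ⟨hrfacts.1, hcr⟩
        have hcleaf : ∀ b, G.Adj c b → b = u := by
          intro b hcb
          by_contra hbu2
          by_cases hbrc : b ∈ (r.concat huc).support
          · have hqpath : ((r.concat huc).takeUntil b hbrc).IsPath := hrc.takeUntil hbrc
            have hbc : b ≠ c := hcb.ne'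
            have hcq : c ∉ ((r.concat huc).takeUntil b hbrc).support :=
              notMem_end_takeUntil hrc hbrc hbc
            have hq2 : (((r.concat huc).takeUntil b hbrc).concat hcb.symm).IsPath :=
              (concat_isPath_iff' _ _).mpr ⟨hqpath, hcq⟩
            have heq : (⟨r.concat huc, hrc⟩ : G.Path v c) =
                ⟨((r.concat huc).takeUntil b hbrc).concat hcb.symm, hq2⟩ := hpu _ _
            have heqw : r.concat huc = ((r.concat huc).takeUntil b hbrc).concat hcb.symm :=
              congrArg Subtype.val heq
            obtain ⟨h1, -⟩ := SimpleGraph.Walk.concat_inj heqw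
            exact hbu2 h1.symm
          · have hext : ((r.concat huc).concat hcb).IsPath :=
              (concat_isPath_iff' _ _).mpr ⟨hrc, hbrc⟩
            have hlen := path_length_eq_dist hac _ hext
            rw [SimpleGraph.Walk.length_concat, SimpleGraph.Walk.length_concat] at hlen
            have := hmaxd b ⟨(r.concat huc).concat hcb⟩
            omega
        have hcdeg : G.degree c = 1 := deg_one_of_nbrs G huc.symm hcleaf
        exact hcw (uniqueLeaf G hwc huc huw hcdeg hwdeg)
    have hnbru : G.neighborFinset u = {w, x} := by
      ext z
      rw [mem_neighborFinset, Finset.mem_insert, Finset.mem_singleton]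
      constructor
      · exact hunbr z
      · rintro (rfl | rfl)
        · exact huw
        · exact hxu.symm
    have hdegu : G.degree u = 2 := by
      show (G.neighborFinset u).card = 2
      rw [hnbru]
      exact Finset.card_pair hwx
    have hu_ne_w : u ≠ w := huw.ne
    have hu_ne_x : u ≠ x := hxu.ne'
    have hv_ne_w : v ≠ w := fun h => hv1 (h ▸ hwdeg)
    -- x has a neighbor besides u and w
    have hxb : ∃ bx, G.Adj x bx ∧ bx ≠ u ∧ bx ≠ w := by
      by_contra hno
      push_neg at hno
      have hxnbr : ∀ b, G.Adj x b → b = u := by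
        intro b hb
        by_cases hbu : b = u
        · exact hbu
        · exact absurd (hwnbr x ((hno b hb hbu) ▸ hb).symm) (Ne.symm hu_ne_x)
      have hxdeg : G.degree x = 1 := deg_one_of_nbrs G hxu hxnbr
      exact hwx (uniqueLeaf G hwc huw hxu.symm hwdeg hxdeg)
    -- the graph G2 with u, w removed
    have hcard2 : Fintype.card {z : V // z ≠ u ∧ z ≠ w} = m - 2 := by
      rw [Fintype.card_subtype]
      have hfil : univ.filter (fun z : V => z ≠ u ∧ z ≠ w) = univ \ {u, w} := by
        ext z
        simp only [mem_filter, mem_univ, true_and, mem_sdiff, mem_insert, mem_singleton]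
        tauto
      rw [hfil, card_sdiff_of_subset (subset_univ _), card_univ, hcard]
      congr 1
      rw [card_insert_of_notMem (by simp [hu_ne_w]), card_singleton]
    have hac2 : (RG G (fun z => z ≠ u ∧ z ≠ w)).IsAcyclic := RG_acyclic G hac
    have hdeg2 : ∀ z2, 0 < (RG G (fun z => z ≠ u ∧ z ≠ w)).degree z2 := by
      rintro ⟨z, hzu, hzw⟩
      rw [RG_degree]
      apply card_pos.mpr
      obtain ⟨b, hb⟩ := (G.degree_pos_iff_exists_adj z).mp (hdeg z)
      by_cases hbu : b = u
      · have hz_x : z = x := by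
          rcases hunbr z (hbu ▸ hb).symm with h | h
          · exact absurd h hzw
          · exact h
        obtain ⟨bx, hbx, hbxu, hbxw⟩ := hxb
        exact ⟨bx, mem_filter.mpr ⟨(G.mem_neighborFinset _ _).mpr (hz_x ▸ hbx), hbxu, hbxw⟩⟩
      · by_cases hbw : b = w
        · exact absurd (hwnbr z (hbw ▸ hb).symm) hzu
        · exact ⟨b, mem_filter.mpr ⟨(G.mem_neighborFinset _ _).mpr hb, hbu, hbw⟩⟩
    have hwc2 : WC (RG G (fun z => z ≠ u ∧ z ≠ w)) :=
      WC_del_pendant G huw (nbr_singleton G hwdeg huw.symm) hwc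
    have hIH2 := IH (m - 2) (by omega) {z : V // z ≠ u ∧ z ≠ w}
      (RG G (fun z => z ≠ u ∧ z ≠ w)) hcard2 hac2 hdeg2 hwc2
    by_cases hcaseB : ∃ y, G.Adj x y ∧ G.degree y = 1
    · -- Case B : x has a leaf neighbor; v is still bad in G2, contradiction with IH
      obtain ⟨y, hxy, hy1⟩ := hcaseB
      have hyu : y ≠ u := fun h => by rw [h, hdegu] at hy1; exact absurd hy1 (by norm_num)
      have hyw : y ≠ w := fun h => hu_ne_x.symm (hwnbr x ((h ▸ hxy)).symm)
      have hvx : v ≠ x := fun h => hbad y (h ▸ hxy) hy1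
      have hvy : v ≠ y := fun h => hv1 (h ▸ hy1)
      rcases hIH2.1 ⟨v, hvu, hv_ne_w⟩ with hdv2 | ⟨⟨z, hzu, hzw⟩, hadj2, hz12⟩
      · rw [RG_degree] at hdv2
        have hfil : (G.neighborFinset v).filter (fun z : V => z ≠ u ∧ z ≠ w) =
            G.neighborFinset v := by
          apply filter_true_of_mem
          intro b hbmem
          have hb := (G.mem_neighborFinset v b).mp hbmem
          constructor
          · intro hbu
            rcases hunbr v (hbu ▸ hb).symm with h | h
            · exact hv_ne_w h
            · exact hvx h
          · intro hbw
            exact hvu (hwnbr v (hbw ▸ hb).symm)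
        rw [hfil] at hdv2
        exact hv1 hdv2
      · have hvz : G.Adj v z := hadj2
        have hz_ne1 : G.degree z ≠ 1 := hbad z hvz
        rw [RG_degree] at hz12
        by_cases hzx : z = x
        · subst hzx
          have h2le : 2 ≤ ((G.neighborFinset z).filter (fun t : V => t ≠ u ∧ t ≠ w)).card := by
            have hsubpair : ({y, v} : Finset V) ⊆
                (G.neighborFinset z).filter (fun t : V => t ≠ u ∧ t ≠ w) := by
              intro t ht
              rcases mem_insert.mp ht with rfl | ht
              · exact mem_filter.mpr ⟨(G.mem_neighborFinset _ _).mpr hxy, hyu, hyw⟩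
              · rw [mem_singleton] at ht
                subst ht
                exact mem_filter.mpr
                  ⟨(G.mem_neighborFinset _ _).mpr hvz.symm, hvu, hv_ne_w⟩
            calc 2 = ({y, v} : Finset V).card := (Finset.card_pair (Ne.symm hvy)).symm
            _ ≤ _ := card_le_card hsubpair
          have hz12' : ((G.neighborFinset z).filter (fun t : V => t ≠ u ∧ t ≠ w)).card = 1 :=
            hz12
          omega
        · have hfil : (G.neighborFinset z).filter (fun t : V => t ≠ u ∧ t ≠ w) =
              G.neighborFinset z := by
            apply filter_true_of_mem
            intro b hbmem
            have hb := (G.mem_neighborFinset z b).mp hbmem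
            constructor
            · intro hbu
              rcases hunbr z (hbu ▸ hb).symm with h | h
              · exact hzw h
              · exact hzx h
            · intro hbw
              exact hzu (hwnbr z (hbw ▸ hb).symm)
          rw [hfil] at hz12
          exact hz_ne1 hz12
    · -- Case A : x has no leaf neighbor; remove N[u] and compare parities
      push_neg at hcaseB
      have hm3 : 3 ≤ m := by
        have hsub3 : ({u, w, x} : Finset V) ⊆ univ := subset_univ _
        have hcard3' : ({u, w, x} : Finset V).card = 3 := by
          rw [card_insert_of_notMem (by simp [hu_ne_w, hu_ne_x]),
            card_insert_of_notMem (by simp [hwx]), card_singleton]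
        have := card_le_card hsub3
        rw [hcard3', card_univ, hcard] at this
        exact this
      have hcard3 : Fintype.card {z : V // z ≠ u ∧ z ≠ w ∧ z ≠ x} = m - 3 := by
        rw [Fintype.card_subtype]
        have hfil : univ.filter (fun z : V => z ≠ u ∧ z ≠ w ∧ z ≠ x) =
            univ \ {u, w, x} := by
          ext z
          simp only [mem_filter, mem_univ, true_and, mem_sdiff, mem_insert, mem_singleton]
          tauto
        rw [hfil, card_sdiff_of_subset (subset_univ _), card_univ, hcard]
        congr 1
        rw [card_insert_of_notMem (by simp [hu_ne_w, hu_ne_x]),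
          card_insert_of_notMem (by simp [hwx]), card_singleton]
      have hac3 : (RG G (fun z => z ≠ u ∧ z ≠ w ∧ z ≠ x)).IsAcyclic := RG_acyclic G hac
      have hdeg3 : ∀ z3, 0 < (RG G (fun z => z ≠ u ∧ z ≠ w ∧ z ≠ x)).degree z3 := by
        rintro ⟨z, hzu, hzw, hzx⟩
        rw [RG_degree]
        apply card_pos.mpr
        have hnbrz : ∀ b, G.Adj z b → b = x ∨ (b ≠ u ∧ b ≠ w ∧ b ≠ x) := by
          intro b hb
          by_cases hbu : b = u
          · exfalso
            rcases hunbr z (hbu ▸ hb).symm with h | h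
            · exact hzw h
            · exact hzx h
          · by_cases hbw : b = w
            · exact absurd (hwnbr z (hbw ▸ hb).symm) hzu
            · by_cases hbx : b = x
              · exact Or.inl hbx
              · exact Or.inr ⟨hbu, hbw, hbx⟩
        by_contra hemp
        rw [Finset.not_nonempty_iff_eq_empty] at hemp
        have hall : ∀ b, G.Adj z b → b = x := by
          intro b hb
          rcases hnbrz b hb with h | h
          · exact h
          · exact absurd (mem_filter.mpr ⟨(G.mem_neighborFinset _ _).mpr hb, h⟩)
              (by rw [hemp]; exact notMem_empty b)
        obtain ⟨b, hb⟩ := (G.degree_pos_iff_exists_adj z).mp (hdeg z)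
        have hbx := hall b hb
        have hzdeg : G.degree z = 1 := deg_one_of_nbrs G (hbx ▸ hb) hall
        exact hcaseB z (hbx ▸ hb).symm hzdeg
      have hwc3 : WC (RG G (fun z => z ≠ u ∧ z ≠ w ∧ z ≠ x)) :=
        WC_del_closed G hnbru hwc
      have hIH3 := IH (m - 3) (by omega) {z : V // z ≠ u ∧ z ≠ w ∧ z ≠ x}
        (RG G (fun z => z ≠ u ∧ z ≠ w ∧ z ≠ x)) hcard3 hac3 hdeg3 hwc3
      obtain ⟨k2, hk2⟩ := hIH2.2
      obtain ⟨k3, hk3⟩ := hIH3.2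
      omega
  refine ⟨part1, ?_⟩
  have hpm : ∀ v : V, ∃! w, G.Adj v w ∧ (G.degree v = 1 ∨ G.degree w = 1) :=
    pendant_unique G hwc part1
  obtain ⟨S, hS, -⟩ := extendInd G ∅ (by intro i hi; simp at hi)
  have hcount := countLemma G hpm hS
  exact ⟨S.card, by omega⟩

end PlumAux

/-- Plummer's characterization: a forest with no isolated vertices is
well-covered iff its pendant edges form a perfect matching (every vertex is
incident to exactly one pendant edge); in that case every maximal independent
set has cardinality `n/2`. -/
theorem stmt_19 {n : ℕ} (G : SimpleGraph (Fin n)) [DecidableRel G.Adj]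
    (hG : G.IsAcyclic) (hiso : ∀ v, 0 < G.degree v) :
    ((∀ S T : Finset (Fin n), IsMaxIndep G S → IsMaxIndep G T →
        S.card = T.card) ↔ (∀ v, ∃! w, PendantAdj G v w)) ∧
    ((∀ S T : Finset (Fin n), IsMaxIndep G S → IsMaxIndep G T →
        S.card = T.card) →
      ∀ S : Finset (Fin n), IsMaxIndep G S → 2 * S.card = n) := by
  have hwc_to_pm : (∀ S T : Finset (Fin n), IsMaxIndep G S → IsMaxIndep G T →
      S.card = T.card) → ∀ v, ∃! w, PendantAdj G v w := by
    intro hwc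
    have hwc' : PlumAux.WC G := fun S T hS hT => hwc S T hS hT
    have hmain := PlumAux.mainInd (Fintype.card (Fin n)) (Fin n) G rfl hG hiso hwc'
    exact fun v => PlumAux.pendant_unique G hwc' hmain.1 v
  have hcount : (∀ v, ∃! w, PendantAdj G v w) →
      ∀ S : Finset (Fin n), IsMaxIndep G S → 2 * S.card = n := by
    intro hpm S hS
    have h := PlumAux.countLemma G (fun v => hpm v) (show PlumAux.MaxInd G S from hS)
    simpa using h
  refine ⟨⟨hwc_to_pm, ?_⟩, ?_⟩
  · intro hpm S T hS hT
    have h1 := hcount hpm S hS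
    have h2 := hcount hpm T hT
    omega
  · intro hwc S hS
    exact hcount (hwc_to_pm hwc) S hS
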